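/- Let n ≥ 1, K ≥ 1, μ ∈ (0,1], L > 0, and let f = f̄ − f̲ where f̄, f̲ : 2^{[n]} → ℝ are normalized and nondecreasing set functions with f̄(S) + f̲(S) ≤ L for all S ⊆ [n]. Fix x ∈ [0,1]^n and let ĝ^{(1)}, …, ĝ^{(K)} be one-point gradient estimators built from K independent samples I_1, …, I_K (each with distribution P(I = i) = (1−μ)λ_i + μ/(n+1)), all at the same point x and the same function f. Then E[‖∑_{k=1}^{K} ĝ^{(k)}‖_2] ≤ (n+1) L √(2K/μ) + K L. -/

import Mathlib

open Finset

/-- The chain set `A_i = {π(0), …, π(i-1)}` determined by a permutation `π` of `Fin n`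
(0-indexed version of `{π(1), …, π(i)}`). -/
def chainSet {n : ℕ} (π : Equiv.Perm (Fin n)) (i : ℕ) : Finset (Fin n) :=
  Finset.univ.filter fun j => (π.symm j : ℕ) < i

/-- Extended sorted coordinates: `extCoord x π 0 = 1`, `extCoord x π i = x (π (i-1))`
for `1 ≤ i ≤ n`, and `extCoord x π i = 0` for `i > n`. -/
def extCoord {n : ℕ} (x : Fin n → ℝ) (π : Equiv.Perm (Fin n)) (i : ℕ) : ℝ :=
  if h : 1 ≤ i ∧ i ≤ n then x (π ⟨i - 1, by omega⟩) else if i = 0 then 1 else 0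

/-- The weight `λ_i = x_{π(i)} - x_{π(i+1)}` (with the conventions `x_{π(0)} = 1`,
`x_{π(n+1)} = 0`). -/
def chainWeight {n : ℕ} (x : Fin n → ℝ) (π : Equiv.Perm (Fin n)) (i : ℕ) : ℝ :=
  extCoord x π i - extCoord x π (i + 1)

/-- The Lovász-extension formula `∑_{i=0}^n λ_i f(A_i)` evaluated with permutation `π`. -/
def lovasz {n : ℕ} (f : Finset (Fin n) → ℝ) (x : Fin n → ℝ) (π : Equiv.Perm (Fin n)) : ℝ :=
  ∑ i ∈ Finset.range (n + 1), chainWeight x π i * f (chainSet π i)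

/-- `π` sorts the coordinates of `x` in nonincreasing order. -/
def isSorting {n : ℕ} (x : Fin n → ℝ) (π : Equiv.Perm (Fin n)) : Prop :=
  ∀ i j : Fin n, i ≤ j → x (π j) ≤ x (π i)

/-- The chain gradient `g(x; f)`, defined by `g_{π(i)} = f(A_i) - f(A_{i-1})`. -/
def chainGrad {n : ℕ} (f : Finset (Fin n) → ℝ) (π : Equiv.Perm (Fin n)) : Fin n → ℝ :=
  fun j => f (chainSet π ((π.symm j : ℕ) + 1)) - f (chainSet π (π.symm j : ℕ))

/-- Membership in the unit hypercube `[0,1]^n`. -/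
def inCube {n : ℕ} (x : Fin n → ℝ) : Prop := ∀ i, 0 ≤ x i ∧ x i ≤ 1

/-- `f` is normalized: `f ∅ = 0`. -/
def normalizedF {n : ℕ} (f : Finset (Fin n) → ℝ) : Prop := f ∅ = 0

/-- `f` is nondecreasing. -/
def nondecreasingF {n : ℕ} (f : Finset (Fin n) → ℝ) : Prop :=
  ∀ A B : Finset (Fin n), A ⊆ B → f A ≤ f B

/-- The marginal gain `f(i | S) = f(S ∪ {i}) - f(S)`. -/
def marginal {n : ℕ} (f : Finset (Fin n) → ℝ) (i : Fin n) (S : Finset (Fin n)) : ℝ :=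
  f (insert i S) - f S

/-- `f` is `α`-weakly DR-submodular: `f(i|A) ≥ α f(i|B)` for all `A ⊆ B`, `i ∉ B`. -/
def weaklyDRSub {n : ℕ} (α : ℝ) (f : Finset (Fin n) → ℝ) : Prop :=
  ∀ A B : Finset (Fin n), A ⊆ B → ∀ i ∉ B, α * marginal f i B ≤ marginal f i A

/-- `f` is `β`-weakly DR-supermodular: `f(i|B) ≥ β f(i|A)` for all `A ⊆ B`, `i ∉ B`. -/
def weaklyDRSuper {n : ℕ} (β : ℝ) (f : Finset (Fin n) → ℝ) : Prop :=
  ∀ A B : Finset (Fin n), A ⊆ B → ∀ i ∉ B, β * marginal f i A ≤ marginal f i B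

/-- The sampling probability `p_i = (1-μ) λ_i + μ/(n+1)` of the exploration mixture. -/
noncomputable def probIdx {n : ℕ} (x : Fin n → ℝ) (π : Equiv.Perm (Fin n)) (μ : ℝ) (i : ℕ) : ℝ :=
  (1 - μ) * chainWeight x π i + μ / ((n : ℝ) + 1)

/-- `f̂_i = 1{I = i} · f(A_I) / p_i`, as a function of the sampled index `I`. -/
noncomputable def fhat {n : ℕ} (x : Fin n → ℝ) (π : Equiv.Perm (Fin n)) (μ : ℝ)
    (f : Finset (Fin n) → ℝ) (I i : ℕ) : ℝ :=
  if I = i then f (chainSet π I) / probIdx x π μ i else 0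

/-- The one-point gradient estimator `ĝ`, with `ĝ_{π(i)} = f̂_i - f̂_{i-1}`, as a
function of the sampled index `I`. -/
noncomputable def ghat {n : ℕ} (x : Fin n → ℝ) (π : Equiv.Perm (Fin n)) (μ : ℝ)
    (f : Finset (Fin n) → ℝ) (I : ℕ) : Fin n → ℝ :=
  fun j => fhat x π μ f I ((π.symm j : ℕ) + 1) - fhat x π μ f I (π.symm j : ℕ)

/-! ### Auxiliary lemmas -/

section Aux1
variable {n : ℕ} (x : Fin n → ℝ) (π : Equiv.Perm (Fin n))

lemma extCoord_anti (hn : 1 ≤ n) (hx : inCube x) (hπ : isSorting x π) (i : ℕ) :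
    extCoord x π (i + 1) ≤ extCoord x π i := by
  unfold extCoord
  rcases Nat.eq_zero_or_pos i with h0 | hip
  · subst h0
    rw [dif_pos (show 1 ≤ 0+1 ∧ 0+1 ≤ n by omega), dif_neg (by omega), if_pos rfl]
    exact (hx _).2
  rcases lt_or_ge i n with hlt | hge
  · rw [dif_pos (show 1 ≤ i+1 ∧ i+1 ≤ n by omega), dif_pos (show 1 ≤ i ∧ i ≤ n by omega)]
    exact hπ ⟨i - 1, by omega⟩ ⟨i + 1 - 1, by omega⟩ (by simp only [Fin.mk_le_mk]; omega)
  rcases eq_or_lt_of_le hge with heq | hgt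
  · rw [dif_neg (by omega), dif_pos (show 1 ≤ i ∧ i ≤ n by omega), if_neg (by omega)]
    exact (hx _).1
  · rw [dif_neg (by omega), dif_neg (by omega), if_neg (by omega), if_neg (by omega)]

lemma chainWeight_nonneg (hn : 1 ≤ n) (hx : inCube x) (hπ : isSorting x π) (i : ℕ) :
    0 ≤ chainWeight x π i :=
  sub_nonneg.2 (extCoord_anti x π hn hx hπ i)

lemma sum_chainWeight : ∑ i ∈ Finset.range (n + 1), chainWeight x π i = 1 := by
  unfold chainWeight
  rw [Finset.sum_range_sub' (fun i => extCoord x π i)]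
  unfold extCoord
  rw [dif_neg (by omega), if_pos rfl, dif_neg (by omega), if_neg (by omega), sub_zero]

lemma probIdx_ge {μ : ℝ} (hn : 1 ≤ n) (hx : inCube x) (hπ : isSorting x π)
    (hμ0 : 0 < μ) (hμ1 : μ ≤ 1) (i : ℕ) : μ / ((n : ℝ) + 1) ≤ probIdx x π μ i := by
  unfold probIdx
  have := chainWeight_nonneg x π hn hx hπ i
  nlinarith

lemma probIdx_pos {μ : ℝ} (hn : 1 ≤ n) (hx : inCube x) (hπ : isSorting x π)
    (hμ0 : 0 < μ) (hμ1 : μ ≤ 1) (i : ℕ) : 0 < probIdx x π μ i :=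
  lt_of_lt_of_le (by positivity) (probIdx_ge x π hn hx hπ hμ0 hμ1 i)

lemma sum_probIdx {μ : ℝ} : ∑ i : Fin (n + 1), probIdx x π μ (i : ℕ) = 1 := by
  rw [Fin.sum_univ_eq_sum_range (fun i => probIdx x π μ i)]
  unfold probIdx
  rw [Finset.sum_add_distrib, ← Finset.mul_sum, sum_chainWeight, Finset.sum_const,
    Finset.card_range]
  rw [nsmul_eq_mul]
  push_cast
  field_simp
  ring

end Aux1

section Aux2
variable {n : ℕ} (x : Fin n → ℝ) (π : Equiv.Perm (Fin n)) (μ : ℝ) (f : Finset (Fin n) → ℝ)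

lemma sum_p_fhat (hp : ∀ i, 0 < probIdx x π μ i) (t : ℕ) (ht : t ≤ n) :
    ∑ i : Fin (n + 1), probIdx x π μ (i : ℕ) * fhat x π μ f (i : ℕ) t
      = f (chainSet π t) := by
  rw [Finset.sum_eq_single (⟨t, by omega⟩ : Fin (n+1))]
  · show probIdx x π μ t * fhat x π μ f t t = _
    unfold fhat; rw [if_pos rfl]
    field_simp
    exact mul_div_cancel_left₀ _ (hp t).ne'
  · intro b _ hb
    have : (b : ℕ) ≠ t := fun h => hb (by ext; simpa using h)
    simp [fhat, this]
  · simp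

lemma mean_ghat (hp : ∀ i, 0 < probIdx x π μ i) (j : Fin n) :
    ∑ i : Fin (n + 1), probIdx x π μ (i : ℕ) * ghat x π μ f (i : ℕ) j
      = f (chainSet π ((π.symm j : ℕ) + 1)) - f (chainSet π (π.symm j : ℕ)) := by
  have hm : (π.symm j : ℕ) < n := (π.symm j).isLt
  simp only [ghat, mul_sub, Finset.sum_sub_distrib]
  rw [sum_p_fhat x π μ f hp _ (by omega), sum_p_fhat x π μ f hp _ (by omega)]

lemma fhat_sq (I t : ℕ) : (fhat x π μ f I t) ^ 2
    = if I = t then (f (chainSet π I) / probIdx x π μ I) ^ 2 else 0 := by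
  unfold fhat; split_ifs with h
  · subst h; rfl
  · simp

lemma sum_ite_le {α : Type*} [Fintype α] (P : α → Prop) [DecidablePred P] {c : ℝ} (hc : 0 ≤ c)
    (h : ∀ a b, P a → P b → a = b) : ∑ a : α, (if P a then c else 0) ≤ c := by
  rw [Finset.sum_ite, Finset.sum_const_zero, add_zero, Finset.sum_const, nsmul_eq_mul]
  have hcard : (Finset.univ.filter P).card ≤ 1 :=
    Finset.card_le_one.2
      (fun a ha b hb => h a b (Finset.mem_filter.1 ha).2 (Finset.mem_filter.1 hb).2)
  calc ((Finset.univ.filter P).card : ℝ) * c ≤ 1 * c := by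
        apply mul_le_mul_of_nonneg_right _ hc
        exact_mod_cast hcard
    _ = c := one_mul c

lemma sumsq_ghat (I : ℕ) :
    ∑ j : Fin n, (ghat x π μ f I j) ^ 2
      ≤ 2 * (f (chainSet π I) / probIdx x π μ I) ^ 2 := by
  have key : ∀ j : Fin n, (ghat x π μ f I j) ^ 2
      = (fhat x π μ f I ((π.symm j : ℕ) + 1)) ^ 2 + (fhat x π μ f I (π.symm j : ℕ)) ^ 2 := by
    intro j
    have hz : fhat x π μ f I ((π.symm j : ℕ) + 1) * fhat x π μ f I (π.symm j : ℕ) = 0 := by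
      unfold fhat; split_ifs with h1 h2 <;> simp_all
    unfold ghat; rw [sub_sq]; linarith [hz]
  simp only [key]
  rw [Finset.sum_add_distrib]
  have h2 : (0:ℝ) ≤ (f (chainSet π I) / probIdx x π μ I) ^ 2 := sq_nonneg _
  have b1 : ∑ j : Fin n, (fhat x π μ f I ((π.symm j : ℕ) + 1)) ^ 2
      ≤ (f (chainSet π I) / probIdx x π μ I) ^ 2 := by
    simp only [fhat_sq]
    apply sum_ite_le _ h2
    intro a b ha hb
    have : π.symm a = π.symm b := by ext; omega
    simpa using congrArg π this
  have b2 : ∑ j : Fin n, (fhat x π μ f I (π.symm j : ℕ)) ^ 2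
      ≤ (f (chainSet π I) / probIdx x π μ I) ^ 2 := by
    simp only [fhat_sq]
    apply sum_ite_le _ h2
    intro a b ha hb
    have : π.symm a = π.symm b := by ext; omega
    simpa using congrArg π this
  linarith

end Aux2

section Aux3
variable {n : ℕ} (π : Equiv.Perm (Fin n))

lemma chainSet_zero : chainSet π 0 = ∅ := by
  simp [chainSet]

lemma chainSet_mono {i i' : ℕ} (h : i ≤ i') : chainSet π i ⊆ chainSet π i' := by
  intro j hj
  simp only [chainSet, Finset.mem_filter] at *
  exact ⟨hj.1, lt_of_lt_of_le hj.2 h⟩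

variable (fbar funder : Finset (Fin n) → ℝ) (L : ℝ)
  (hbar : normalizedF fbar ∧ nondecreasingF fbar)
  (hunder : normalizedF funder ∧ nondecreasingF funder)
  (hsum : ∀ S : Finset (Fin n), fbar S + funder S ≤ L)

include hbar hunder hsum in
lemma abs_f_le (S : Finset (Fin n)) : |fbar S - funder S| ≤ L := by
  have h1 : 0 ≤ fbar S := hbar.1 ▸ hbar.2 ∅ S (Finset.empty_subset S)
  have h2 : 0 ≤ funder S := hunder.1 ▸ hunder.2 ∅ S (Finset.empty_subset S)
  have := hsum S
  rw [abs_le]; constructor <;> linarith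

include hbar hunder hsum in
lemma sum_abs_grad :
    ∑ j : Fin n, |(fbar (chainSet π ((π.symm j : ℕ) + 1)) - funder (chainSet π ((π.symm j : ℕ) + 1)))
        - (fbar (chainSet π (π.symm j : ℕ)) - funder (chainSet π (π.symm j : ℕ)))| ≤ L := by
  have hre : ∀ F : Fin n → ℝ, ∑ j : Fin n, F (π.symm j) = ∑ t : Fin n, F t :=
    fun F => Equiv.sum_comp π.symm F
  rw [hre (fun t => |(fbar (chainSet π ((t : ℕ) + 1)) - funder (chainSet π ((t : ℕ) + 1)))
        - (fbar (chainSet π (t : ℕ)) - funder (chainSet π (t : ℕ)))|)]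
  have hle : ∀ t : Fin n,
      |(fbar (chainSet π ((t : ℕ) + 1)) - funder (chainSet π ((t : ℕ) + 1)))
        - (fbar (chainSet π (t : ℕ)) - funder (chainSet π (t : ℕ)))|
      ≤ (fbar (chainSet π ((t : ℕ) + 1)) - fbar (chainSet π (t : ℕ)))
        + (funder (chainSet π ((t : ℕ) + 1)) - funder (chainSet π (t : ℕ))) := by
    intro t
    have h1 := hbar.2 _ _ (chainSet_mono π (Nat.le_succ (t : ℕ)))
    have h2 := hunder.2 _ _ (chainSet_mono π (Nat.le_succ (t : ℕ)))
    rw [abs_le]; constructor <;> linarith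
  calc _ ≤ ∑ t : Fin n, ((fbar (chainSet π ((t : ℕ) + 1)) - fbar (chainSet π (t : ℕ)))
        + (funder (chainSet π ((t : ℕ) + 1)) - funder (chainSet π (t : ℕ)))) :=
        Finset.sum_le_sum (fun t _ => hle t)
    _ = (fbar (chainSet π n) - fbar (chainSet π 0))
        + (funder (chainSet π n) - funder (chainSet π 0)) := by
        rw [Finset.sum_add_distrib,
          Fin.sum_univ_eq_sum_range (fun t => fbar (chainSet π (t + 1)) - fbar (chainSet π t)),
          Fin.sum_univ_eq_sum_range (fun t => funder (chainSet π (t + 1)) - funder (chainSet π t)),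
          Finset.sum_range_sub (fun t => fbar (chainSet π t)),
          Finset.sum_range_sub (fun t => funder (chainSet π t))]
    _ ≤ L := by
        rw [chainSet_zero, hbar.1, hunder.1]
        simpa using hsum (chainSet π n)

include hbar hunder hsum in
lemma sumsq_grad (hL : 0 ≤ L) :
    ∑ j : Fin n, ((fbar (chainSet π ((π.symm j : ℕ) + 1)) - funder (chainSet π ((π.symm j : ℕ) + 1)))
        - (fbar (chainSet π (π.symm j : ℕ)) - funder (chainSet π (π.symm j : ℕ)))) ^ 2 ≤ L ^ 2 := by
  set a : Fin n → ℝ := fun j =>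
    (fbar (chainSet π ((π.symm j : ℕ) + 1)) - funder (chainSet π ((π.symm j : ℕ) + 1)))
      - (fbar (chainSet π (π.symm j : ℕ)) - funder (chainSet π (π.symm j : ℕ))) with ha
  have hM := sum_abs_grad π fbar funder L hbar hunder hsum
  have hMnn : (0:ℝ) ≤ ∑ j : Fin n, |a j| := Finset.sum_nonneg (fun j _ => abs_nonneg _)
  calc ∑ j : Fin n, (a j) ^ 2 ≤ ∑ j : Fin n, |a j| * (∑ j' : Fin n, |a j'|) := by
        apply Finset.sum_le_sum
        intro j _
        have h1 : |a j| ≤ ∑ j' : Fin n, |a j'| :=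
          Finset.single_le_sum (fun i _ => abs_nonneg (a i)) (Finset.mem_univ j)
        rw [sq, ← abs_mul_abs_self]
        exact mul_le_mul_of_nonneg_left h1 (abs_nonneg _)
    _ = (∑ j : Fin n, |a j|) * (∑ j' : Fin n, |a j'|) := by rw [← Finset.sum_mul]
    _ ≤ L * L := mul_le_mul hM hM hMnn hL
    _ = L ^ 2 := (sq L).symm

end Aux3

section Aux4
variable {K N : ℕ} (p : Fin N → ℝ) (hp1 : ∑ i : Fin N, p i = 1)

lemma prod_fun_sum (h : Fin K → Fin N → ℝ) :
    ∑ v : Fin K → Fin N, ∏ k : Fin K, h k (v k) = ∏ k : Fin K, ∑ i : Fin N, h k i := by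
  rw [Finset.prod_univ_sum (fun _ => Finset.univ) h, Fintype.piFinset_univ]

include hp1 in
lemma prodmeas_one (F : Fin N → ℝ) (k : Fin K) :
    ∑ v : Fin K → Fin N, (∏ k' : Fin K, p (v k')) * F (v k) = ∑ i : Fin N, p i * F i := by
  have step : ∀ v : Fin K → Fin N, (∏ k' : Fin K, p (v k')) * F (v k)
      = ∏ k' : Fin K, (p (v k') * (if k' = k then F (v k') else 1)) := by
    intro v
    rw [Finset.prod_mul_distrib, Finset.prod_ite_eq' Finset.univ k (fun k' => F (v k')),
      if_pos (Finset.mem_univ k)]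
  simp only [step]
  rw [prod_fun_sum (fun k' (i : Fin N) => p i * (if k' = k then F i else 1))]
  have inner : ∀ k' : Fin K, (∑ i : Fin N, p i * (if k' = k then F i else 1))
      = if k' = k then (∑ i : Fin N, p i * F i) else 1 := by
    intro k'; split_ifs with hk
    · rfl
    · simp [hp1]
  simp only [inner]
  rw [Finset.prod_ite_eq' Finset.univ k (fun _ => ∑ i : Fin N, p i * F i),
    if_pos (Finset.mem_univ k)]

include hp1 in
lemma prodmeas_two (F G : Fin N → ℝ) (k l : Fin K) (hkl : k ≠ l) :
    ∑ v : Fin K → Fin N, (∏ k' : Fin K, p (v k')) * (F (v k) * G (v l))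
      = (∑ i : Fin N, p i * F i) * (∑ i : Fin N, p i * G i) := by
  have step : ∀ v : Fin K → Fin N, (∏ k' : Fin K, p (v k')) * (F (v k) * G (v l))
      = ∏ k' : Fin K, (p (v k') * ((if k' = k then F (v k') else 1)
          * (if k' = l then G (v k') else 1))) := by
    intro v
    simp only [Finset.prod_mul_distrib]
    rw [Finset.prod_ite_eq' Finset.univ k (fun k' => F (v k')), if_pos (Finset.mem_univ k),
      Finset.prod_ite_eq' Finset.univ l (fun k' => G (v k')), if_pos (Finset.mem_univ l)]
  simp only [step]
  rw [prod_fun_sum (fun k' (i : Fin N) => p i * ((if k' = k then F i else 1)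
      * (if k' = l then G i else 1)))]
  have inner : ∀ k' : Fin K, (∑ i : Fin N, p i * ((if k' = k then F i else 1)
        * (if k' = l then G i else 1)))
      = (if k' = k then (∑ i : Fin N, p i * F i) else 1)
        * (if k' = l then (∑ i : Fin N, p i * G i) else 1) := by
    intro k'
    by_cases hk : k' = k
    · have hl : ¬ k' = l := fun h => hkl (by rw [← hk, h])
      simp only [if_pos hk, if_neg hl, mul_one]
    · by_cases hl : k' = l
      · simp only [if_neg hk, if_pos hl, one_mul]
      · simp only [if_neg hk, if_neg hl, one_mul, mul_one]
        exact hp1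
  simp only [inner]
  rw [Finset.prod_mul_distrib,
    Finset.prod_ite_eq' Finset.univ k (fun _ => ∑ i : Fin N, p i * F i), if_pos (Finset.mem_univ k),
    Finset.prod_ite_eq' Finset.univ l (fun _ => ∑ i : Fin N, p i * G i), if_pos (Finset.mem_univ l)]

include hp1 in
lemma prodmeas_sq (a : Fin N → ℝ) :
    ∑ v : Fin K → Fin N, (∏ k' : Fin K, p (v k')) * (∑ k : Fin K, a (v k)) ^ 2
      = (K : ℝ) ^ 2 * (∑ i : Fin N, p i * a i) ^ 2
        + (K : ℝ) * ((∑ i : Fin N, p i * a i ^ 2) - (∑ i : Fin N, p i * a i) ^ 2) := by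
  have expand : ∀ v : Fin K → Fin N, (∏ k' : Fin K, p (v k')) * (∑ k : Fin K, a (v k)) ^ 2
      = ∑ k : Fin K, ∑ l : Fin K, (∏ k' : Fin K, p (v k')) * (a (v k) * a (v l)) := by
    intro v
    rw [sq, Finset.sum_mul_sum]
    rw [Finset.mul_sum]
    apply Finset.sum_congr rfl; intro k _
    rw [Finset.mul_sum]
  simp only [expand]
  rw [Finset.sum_comm]
  have swap2 : ∀ k : Fin K, ∑ v : Fin K → Fin N, ∑ l : Fin K,
      (∏ k' : Fin K, p (v k')) * (a (v k) * a (v l))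
      = ∑ l : Fin K, ∑ v : Fin K → Fin N, (∏ k' : Fin K, p (v k')) * (a (v k) * a (v l)) :=
    fun k => Finset.sum_comm
  simp only [swap2]
  have inner : ∀ k l : Fin K, ∑ v : Fin K → Fin N, (∏ k' : Fin K, p (v k')) * (a (v k) * a (v l))
      = if l = k then (∑ i : Fin N, p i * a i ^ 2) else (∑ i : Fin N, p i * a i) ^ 2 := by
    intro k l
    rcases eq_or_ne l k with rfl | hlk
    · rw [if_pos rfl]
      have : ∀ v : Fin K → Fin N, a (v l) * a (v l) = (fun i => a i ^ 2) (v l) := by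
        intro v; simp [sq]
      simp only [this]
      exact prodmeas_one p hp1 (fun i => a i ^ 2) l
    · rw [if_neg hlk, sq]
      exact prodmeas_two p hp1 a a k l (fun h => hlk h.symm)
  simp only [inner]
  have row : ∀ k : Fin K, ∑ l : Fin K, (if l = k then (∑ i : Fin N, p i * a i ^ 2)
        else (∑ i : Fin N, p i * a i) ^ 2)
      = (K : ℝ) * (∑ i : Fin N, p i * a i) ^ 2
        + ((∑ i : Fin N, p i * a i ^ 2) - (∑ i : Fin N, p i * a i) ^ 2) := by
    intro k
    have : ∀ l : Fin K, (if l = k then (∑ i : Fin N, p i * a i ^ 2)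
          else (∑ i : Fin N, p i * a i) ^ 2)
        = (∑ i : Fin N, p i * a i) ^ 2 + (if l = k then (∑ i : Fin N, p i * a i ^ 2)
            - (∑ i : Fin N, p i * a i) ^ 2 else 0) := by
      intro l; split_ifs <;> ring
    simp only [this]
    rw [Finset.sum_add_distrib, Finset.sum_const, Finset.card_univ, Fintype.card_fin,
      Finset.sum_ite_eq' Finset.univ k, if_pos (Finset.mem_univ k), nsmul_eq_mul]
  simp only [row]
  rw [Finset.sum_const, Finset.card_univ, Fintype.card_fin, nsmul_eq_mul]
  ring

end Aux4

section Aux5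

lemma sum_mul_sqrt_le {α : Type*} [Fintype α] (W S : α → ℝ) (hW : ∀ v, 0 ≤ W v)
    (hS : ∀ v, 0 ≤ S v) (hW1 : ∑ v : α, W v = 1) :
    ∑ v : α, W v * Real.sqrt (S v) ≤ Real.sqrt (∑ v : α, W v * S v) := by
  have key : ∀ v, W v * Real.sqrt (S v) = Real.sqrt (W v) * Real.sqrt (W v * S v) := by
    intro v
    rw [← Real.sqrt_mul (hW v) (W v * S v),
      show W v * (W v * S v) = (W v) ^ 2 * S v by ring,
      Real.sqrt_mul (sq_nonneg _), Real.sqrt_sq (hW v)]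
  have hnn : 0 ≤ ∑ v : α, W v * Real.sqrt (S v) :=
    Finset.sum_nonneg fun v _ => mul_nonneg (hW v) (Real.sqrt_nonneg _)
  rw [Real.le_sqrt hnn (Finset.sum_nonneg fun v _ => mul_nonneg (hW v) (hS v))]
  calc (∑ v : α, W v * Real.sqrt (S v)) ^ 2
      = (∑ v : α, Real.sqrt (W v) * Real.sqrt (W v * S v)) ^ 2 := by
        congr 1; exact Finset.sum_congr rfl fun v _ => key v
    _ ≤ (∑ v : α, Real.sqrt (W v) ^ 2) * (∑ v : α, Real.sqrt (W v * S v) ^ 2) :=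
        Finset.sum_mul_sq_le_sq_mul_sq _ _ _
    _ = (∑ v : α, W v) * (∑ v : α, Real.sqrt (W v * S v) ^ 2) := by
        congr 1; exact Finset.sum_congr rfl fun v _ => Real.sq_sqrt (hW v)
    _ = ∑ v : α, W v * S v := by
        rw [hW1, one_mul]
        refine Finset.sum_congr rfl fun v _ => ?_
        exact Real.sq_sqrt (mul_nonneg (hW v) (hS v))

lemma sqrt_sq_add_sq_le (X Y : ℝ) (hX : 0 ≤ X) (hY : 0 ≤ Y) :
    Real.sqrt (X ^ 2 + Y ^ 2) ≤ X + Y := by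
  have h1 : X ^ 2 + Y ^ 2 ≤ (X + Y) ^ 2 := by nlinarith [mul_nonneg hX hY]
  calc Real.sqrt (X ^ 2 + Y ^ 2) ≤ Real.sqrt ((X + Y) ^ 2) := Real.sqrt_le_sqrt h1
    _ = X + Y := Real.sqrt_sq (by positivity)

end Aux5

/-- for `K` independent one-point gradient estimators at the same point
`x` and same `f = f̄ - f̲`, `E[‖∑_k ĝ^{(k)}‖₂] ≤ (n+1) L √(2K/μ) + K L`. The
expectation over the `K` i.i.d. sampled indices is written as the explicit finite sum
over all index tuples weighted by the product of the sampling probabilities. -/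
theorem blocked_ghat_sum_norm (n K : ℕ) (hn : 1 ≤ n) (hK : 1 ≤ K) (μ L : ℝ)
    (hμ : 0 < μ ∧ μ ≤ 1) (hL : 0 < L)
    (fbar funder : Finset (Fin n) → ℝ)
    (hbar : normalizedF fbar ∧ nondecreasingF fbar)
    (hunder : normalizedF funder ∧ nondecreasingF funder)
    (hsum : ∀ S : Finset (Fin n), fbar S + funder S ≤ L)
    (x : Fin n → ℝ) (hx : inCube x) (π : Equiv.Perm (Fin n)) (hπ : isSorting x π) :
    ∑ v : Fin K → Fin (n + 1),
        (∏ k : Fin K, probIdx x π μ (v k)) *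
          Real.sqrt (∑ j : Fin n,
            (∑ k : Fin K, ghat x π μ (fun S => fbar S - funder S) (v k) j) ^ 2)
      ≤ ((n : ℝ) + 1) * L * Real.sqrt (2 * K / μ) + K * L := by
  obtain ⟨hμ0, hμ1⟩ := hμ
  set f : Finset (Fin n) → ℝ := fun S => fbar S - funder S with hf
  have hppos : ∀ i, 0 < probIdx x π μ i := probIdx_pos x π hn hx hπ hμ0 hμ1
  have hpge : ∀ i, μ / ((n:ℝ)+1) ≤ probIdx x π μ i := probIdx_ge x π hn hx hπ hμ0 hμ1
  set P : Fin (n+1) → ℝ := fun i => probIdx x π μ (i : ℕ) with hPdef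
  have hP1 : ∑ i : Fin (n+1), P i = 1 := sum_probIdx x π
  have habs : ∀ S, |f S| ≤ L := abs_f_le fbar funder L hbar hunder hsum
  -- the weights
  set W : (Fin K → Fin (n+1)) → ℝ := fun v => ∏ k : Fin K, P (v k) with hWdef
  set S : (Fin K → Fin (n+1)) → ℝ := fun v => ∑ j : Fin n,
      (∑ k : Fin K, ghat x π μ f ((v k : ℕ)) j) ^ 2 with hSdef
  have hWnn : ∀ v, 0 ≤ W v := fun v => Finset.prod_nonneg fun k _ => (hppos _).le
  have hSnn : ∀ v, 0 ≤ S v := fun v => Finset.sum_nonneg fun j _ => sq_nonneg _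
  have hW1 : ∑ v : Fin K → Fin (n+1), W v = 1 := by
    rw [hWdef, prod_fun_sum (fun _ (i : Fin (n+1)) => P i)]
    simp [hP1]
  -- Second moment computation
  have hE : ∑ v : Fin K → Fin (n+1), W v * S v
      = ∑ j : Fin n, ((K : ℝ) ^ 2 * (∑ i : Fin (n+1), P i * ghat x π μ f (i : ℕ) j) ^ 2
        + (K : ℝ) * ((∑ i : Fin (n+1), P i * (ghat x π μ f (i : ℕ) j) ^ 2)
          - (∑ i : Fin (n+1), P i * ghat x π μ f (i : ℕ) j) ^ 2)) := by
    rw [show ∑ v : Fin K → Fin (n+1), W v * S v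
        = ∑ j : Fin n, ∑ v : Fin K → Fin (n+1),
            W v * (∑ k : Fin K, ghat x π μ f ((v k : ℕ)) j) ^ 2 by
      rw [Finset.sum_comm]
      exact Finset.sum_congr rfl fun v _ => Finset.mul_sum _ _ _]
    refine Finset.sum_congr rfl fun j _ => ?_
    exact prodmeas_sq P hP1 (fun i => ghat x π μ f (i : ℕ) j)
  -- bounds on the two pieces
  have hT : ∀ j : Fin n, ∑ i : Fin (n+1), P i * ghat x π μ f (i : ℕ) j
      = f (chainSet π ((π.symm j : ℕ) + 1)) - f (chainSet π (π.symm j : ℕ)) :=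
    mean_ghat x π μ f hppos
  have hTsq : ∑ j : Fin n, (∑ i : Fin (n+1), P i * ghat x π μ f (i : ℕ) j) ^ 2 ≤ L ^ 2 := by
    have := sumsq_grad π fbar funder L hbar hunder hsum hL.le
    calc ∑ j : Fin n, (∑ i : Fin (n+1), P i * ghat x π μ f (i : ℕ) j) ^ 2
        = ∑ j : Fin n, ((fbar (chainSet π ((π.symm j : ℕ) + 1))
              - funder (chainSet π ((π.symm j : ℕ) + 1)))
            - (fbar (chainSet π (π.symm j : ℕ)) - funder (chainSet π (π.symm j : ℕ)))) ^ 2 := by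
          refine Finset.sum_congr rfl fun j _ => ?_
          rw [hT j]
      _ ≤ L ^ 2 := this
  have hQ : ∑ j : Fin n, ∑ i : Fin (n+1), P i * (ghat x π μ f (i : ℕ) j) ^ 2
      ≤ 2 * L ^ 2 * ((n:ℝ)+1) ^ 2 / μ := by
    rw [Finset.sum_comm]
    have hQi : ∀ i : Fin (n+1), ∑ j : Fin n, P i * (ghat x π μ f (i : ℕ) j) ^ 2
        ≤ 2 * L ^ 2 * ((n:ℝ)+1) / μ := by
      intro i
      rw [← Finset.mul_sum]
      have h1 := sumsq_ghat x π μ f (i : ℕ)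
      have hpi := hppos (i : ℕ)
      have habsi := habs (chainSet π (i : ℕ))
      have hfsq : (f (chainSet π (i : ℕ))) ^ 2 ≤ L ^ 2 := by
        have := abs_nonneg (f (chainSet π (i : ℕ)))
        nlinarith [sq_abs (f (chainSet π (i : ℕ)))]
      calc P i * ∑ j : Fin n, (ghat x π μ f (i : ℕ) j) ^ 2
          ≤ P i * (2 * (f (chainSet π (i : ℕ)) / probIdx x π μ (i : ℕ)) ^ 2) :=
            mul_le_mul_of_nonneg_left h1 (hppos _).le
        _ = 2 * (f (chainSet π (i : ℕ))) ^ 2 / probIdx x π μ (i : ℕ) := by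
            field_simp; ring
        _ ≤ 2 * L ^ 2 / (μ / ((n:ℝ)+1)) := by
            apply div_le_div₀ (by positivity) (by nlinarith) (by positivity) (hpge _)
        _ = 2 * L ^ 2 * ((n:ℝ)+1) / μ := by
            field_simp
    calc ∑ i : Fin (n+1), ∑ j : Fin n, P i * (ghat x π μ f (i : ℕ) j) ^ 2
        ≤ ∑ _i : Fin (n+1), 2 * L ^ 2 * ((n:ℝ)+1) / μ := Finset.sum_le_sum fun i _ => hQi i
      _ = ((n:ℝ)+1) * (2 * L ^ 2 * ((n:ℝ)+1) / μ) := by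
          rw [Finset.sum_const, Finset.card_univ, Fintype.card_fin, nsmul_eq_mul]
          push_cast; ring
      _ = 2 * L ^ 2 * ((n:ℝ)+1) ^ 2 / μ := by ring
  -- putting the second moment bound together
  have hTnn : 0 ≤ ∑ j : Fin n, (∑ i : Fin (n+1), P i * ghat x π μ f (i : ℕ) j) ^ 2 :=
    Finset.sum_nonneg fun j _ => sq_nonneg _
  have hK1 : (1:ℝ) ≤ (K:ℝ) := by exact_mod_cast hK
  have hEbound : ∑ v : Fin K → Fin (n+1), W v * S v
      ≤ (((n:ℝ)+1) * L * Real.sqrt (2 * K / μ)) ^ 2 + ((K:ℝ) * L) ^ 2 := by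
    have hsqrt : (Real.sqrt (2 * K / μ)) ^ 2 = 2 * K / μ :=
      Real.sq_sqrt (by positivity)
    rw [hE, Finset.sum_add_distrib, ← Finset.mul_sum, ← Finset.mul_sum,
      Finset.sum_sub_distrib]
    have hX : (((n:ℝ)+1) * L * Real.sqrt (2 * K / μ)) ^ 2
        = 2 * L ^ 2 * ((n:ℝ)+1) ^ 2 / μ * K := by
      rw [mul_pow, mul_pow, hsqrt]; field_simp
    rw [hX, mul_pow]
    nlinarith [mul_le_mul_of_nonneg_left hTsq (show (0:ℝ) ≤ (K:ℝ)^2 - K by nlinarith),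
      mul_le_mul_of_nonneg_left hQ (show (0:ℝ) ≤ (K:ℝ) by linarith), hTnn,
      sq_nonneg L, sq_nonneg (K:ℝ)]
  -- final assembly
  calc ∑ v : Fin K → Fin (n + 1),
        (∏ k : Fin K, probIdx x π μ (v k)) *
          Real.sqrt (∑ j : Fin n, (∑ k : Fin K, ghat x π μ f (v k) j) ^ 2)
      = ∑ v : Fin K → Fin (n+1), W v * Real.sqrt (S v) := rfl
    _ ≤ Real.sqrt (∑ v : Fin K → Fin (n+1), W v * S v) :=
        sum_mul_sqrt_le W S hWnn hSnn hW1
    _ ≤ Real.sqrt ((((n:ℝ)+1) * L * Real.sqrt (2 * K / μ)) ^ 2 + ((K:ℝ) * L) ^ 2) :=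
        Real.sqrt_le_sqrt hEbound
    _ ≤ ((n:ℝ)+1) * L * Real.sqrt (2 * K / μ) + (K:ℝ) * L :=
        sqrt_sq_add_sq_le _ _ (by positivity) (by positivity)
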